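/- arXiv:1505.05255 — 2 statements merged into one kernel-verified Lean document; each statement's English description precedes it below -/
import Mathlib

section
/- Let F(z) = Σ_{j=0}^∞ f_j(z) be a formal power series in n complex variables, where f_j is the homogeneous part of degree j. Suppose U is a nonempty open subset of the sphere of radius ε in ℂⁿ such that for every z ∈ U, the one-variable formal power series t ↦ F(tz) = Σ_j t^j f_j(z) is a polynomial (only finitely many nonzero coefficients). Then F is a polynomial, i.e., f_j ≡ 0 for all but finitely many j. -/
/-! If `t ↦ F(tz)` is a polynomial for every `z ∈ U`, then by homogeneity the same holds on the open
cone over `U`, which is therefore covered by the closed sets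
`C N = {x | f_j(x) = 0 for all j > N}`. By Baire one `C N` has interior, and a polynomial vanishing
on an open set is zero, so `f_j = 0` for all `j > N`. -/

open MvPolynomial Topology Metric

namespace MvPolynomial

theorem IsHomogeneous.eval_smul {R σ : Type*} [CommSemiring R] {φ : MvPolynomial σ R} {m : ℕ}
    (hφ : φ.IsHomogeneous m) (c : R) (x : σ → R) : eval (c • x) φ = c ^ m * eval x φ := by
  rw [eval_eq, eval_eq, Finset.mul_sum]
  refine Finset.sum_congr rfl fun d hd => ?_
  have hdeg : ∑ i ∈ d.support, d i = m := by
    simpa [Finsupp.weight_apply, Finsupp.sum] using hφ (mem_support_iff.mp hd)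
  simp_rw [Pi.smul_apply, smul_eq_mul, mul_pow]
  rw [Finset.prod_mul_distrib, Finset.prod_pow_eq_pow_sum, hdeg]
  ring

theorem IsHomogeneous.eval_smul_eq_zero_iff {R σ : Type*} [CommRing R] [IsDomain R]
    {φ : MvPolynomial σ R} {m : ℕ} (hφ : φ.IsHomogeneous m) {c : R} (hc : c ≠ 0) (x : σ → R) :
    eval (c • x) φ = 0 ↔ eval x φ = 0 := by
  rw [hφ.eval_smul, mul_eq_zero, or_iff_right (pow_ne_zero m hc)]

theorem eq_zero_of_eval_eq_zero_of_mem_nhds {R σ : Type*} [CommRing R] [IsDomain R]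
    [TopologicalSpace R] [T1Space R] [∀ a : R, (𝓝[≠] a).NeBot] {p : MvPolynomial σ R}
    {s : Set (σ → R)} {x : σ → R} (hs : s ∈ 𝓝 x) (h : ∀ y ∈ s, eval y p = 0) : p = 0 := by
  rw [nhds_pi, Filter.mem_pi] at hs
  obtain ⟨I, -, t, ht, hts⟩ := hs
  refine funext_set t (fun i => infinite_of_mem_nhds (x i) (ht i)) fun y hy => ?_
  rw [h y (hts fun i _ => hy i trivial), map_zero]

end MvPolynomial

theorem nonempty_interior_of_subset_iUnion_of_closed {X ι : Type*} [TopologicalSpace X]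
    [BaireSpace X] [Countable ι] {s : Set X} (hs : IsOpen s) (hne : s.Nonempty)
    {C : ι → Set X} (hC : ∀ i, IsClosed (C i)) (hsC : s ⊆ ⋃ i, C i) :
    ∃ i, (interior (C i)).Nonempty := by
  by_contra! h
  refine not_isMeagre_of_isOpen hs hne (IsMeagre.mono hsC ?_)
  exact isMeagre_iUnion fun i => ((hC i).isNowhereDense_iff.2 (h i)).isMeagre

theorem isOpen_cone_of_isOpen_sphere {E : Type*} [NormedAddCommGroup E] [NormedSpace ℝ E]
    {ε : ℝ} (hε : 0 ≤ ε) {U : Set E} (hU : IsOpen (((↑) : sphere (0 : E) ε → E) ⁻¹' U)) :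
    IsOpen {x : E | x ≠ 0 ∧ (ε / ‖x‖) • x ∈ U} := by
  obtain ⟨O, hO, hOU⟩ := isOpen_induced_iff.mp hU
  have hcont : ContinuousOn (fun x : E => (ε / ‖x‖) • x) {x | x ≠ 0} :=
    (continuousOn_const.div continuous_norm.continuousOn fun x hx => norm_ne_zero_iff.2 hx).smul
      continuousOn_id
  convert hcont.isOpen_inter_preimage isOpen_ne hO using 1
  ext x
  refine and_congr_right fun hx => ?_
  have hsphere : (ε / ‖x‖) • x ∈ sphere (0 : E) ε := by
    rw [mem_sphere_zero_iff_norm, norm_smul, Real.norm_eq_abs, abs_div, abs_norm, abs_of_nonneg hε,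
      div_mul_cancel₀ _ (norm_ne_zero_iff.2 hx)]
  exact (Set.ext_iff.mp hOU ⟨_, hsphere⟩).symm

theorem stmt_0 (n : ℕ) (ε : ℝ) (hε : 0 < ε)
    (f : ℕ → MvPolynomial (Fin n) ℂ)
    (hhom : ∀ j, (f j).IsHomogeneous j)
    (U : Set (EuclideanSpace ℂ (Fin n)))
    (hUsub : U ⊆ Metric.sphere 0 ε)
    (hUopen : IsOpen (((↑) : Metric.sphere (0 : EuclideanSpace ℂ (Fin n)) ε → EuclideanSpace ℂ (Fin n)) ⁻¹' U))
    (hUne : U.Nonempty)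
    (hpoly : ∀ z ∈ U, ∃ N : ℕ, ∀ j, N < j → MvPolynomial.eval (fun i => z i) (f j) = 0) :
    ∃ N : ℕ, ∀ j, N < j → f j = 0 := by
  set C : ℕ → Set (Fin n → ℂ) := fun N => {x | ∀ j, N < j → eval x (f j) = 0}
  have hC : ∀ N, IsClosed (C N) := fun N => by
    simp only [C, Set.ofPred_forall]
    exact isClosed_iInter fun j => isClosed_iInter fun _ =>
      isClosed_eq (continuous_eval (f j)) continuous_const
  set K := {x : EuclideanSpace ℂ (Fin n) | x ≠ 0 ∧ (ε / ‖x‖) • x ∈ U}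
  have hKne : (WithLp.ofLp '' K).Nonempty := by
    obtain ⟨w, hw⟩ := hUne
    have hnorm : ‖w‖ = ε := mem_sphere_zero_iff_norm.mp (hUsub hw)
    refine ⟨_, w, ⟨?_, ?_⟩, rfl⟩
    · exact norm_ne_zero_iff.mp (hnorm ▸ hε.ne')
    · rwa [hnorm, div_self hε.ne', one_smul]
  have hKC : WithLp.ofLp '' K ⊆ ⋃ N, C N := by
    rintro _ ⟨x, ⟨hx, hxU⟩, rfl⟩
    obtain ⟨N, hN⟩ := hpoly _ hxU
    refine Set.mem_iUnion.mpr ⟨N, fun j hj => ?_⟩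
    have hc : ((ε / ‖x‖ : ℝ) : ℂ) ≠ 0 := mod_cast (div_pos hε (norm_pos_iff.mpr hx)).ne'
    have hscale : (fun i => ((ε / ‖x‖) • x) i) = ((ε / ‖x‖ : ℝ) : ℂ) • WithLp.ofLp x := by
      ext i
      simp [Complex.real_smul]
    rw [← (hhom j).eval_smul_eq_zero_iff hc, ← hscale]
    exact hN j hj
  have hKopen : IsOpen (WithLp.ofLp '' K) :=
    (EuclideanSpace.equiv (Fin n) ℂ).toHomeomorph.isOpenMap _
      (isOpen_cone_of_isOpen_sphere hε.le hUopen)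
  obtain ⟨N, x, hx⟩ := nonempty_interior_of_subset_iUnion_of_closed hKopen hKne hC hKC
  exact ⟨N, fun j hj => eq_zero_of_eval_eq_zero_of_mem_nhds (mem_interior_iff_mem_nhds.mp hx)
    fun y hy => hy j hj⟩
end

section
/- Let H = {(z, s) ∈ ℂ × ℝ : s ≥ |z|⁴} and M = ∂H = {s = |z|⁴}. The function f : M → ℂ, f(z, s) = √s = |z|², is smooth on M (as a function of z it equals |z|², which is smooth), but the function F : H → ℂ, F(z, s) = √s, which is the unique continuous extension of f to H holomorphic (constant) on each leaf {s = const}, is not differentiable at the origin: ∂F/∂s = 1/(2√s) is unbounded as s → 0⁺. -/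
open Filter Set

lemma sqrt_tendsto_zero_right :
    Filter.Tendsto Real.sqrt (nhdsWithin 0 (Set.Ioi 0)) (nhdsWithin 0 (Set.Ioi 0)) := by
  apply tendsto_nhdsWithin_of_tendsto_nhds_of_eventually_within
  · simpa using (Real.continuous_sqrt.tendsto 0).mono_left nhdsWithin_le_nhds
  · filter_upwards [self_mem_nhdsWithin] with s hs
    exact Real.sqrt_pos.2 hs

lemma inv_sqrt_atTop :
    Filter.Tendsto (fun s : ℝ => (Real.sqrt s)⁻¹) (nhdsWithin 0 (Set.Ioi 0)) Filter.atTop :=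
  tendsto_inv_nhdsGT_zero.comp sqrt_tendsto_zero_right

lemma not_diff_sqrt : ¬ DifferentiableWithinAt ℝ Real.sqrt (Set.Ici 0) 0 := by
  intro h
  have hd := h.hasDerivWithinAt
  have hd' := hd.mono (Set.Ioi_subset_Ici_self (a := (0:ℝ)))
  rw [hasDerivWithinAt_iff_tendsto_slope] at hd'
  have hset : Set.Ioi (0:ℝ) \ {0} = Set.Ioi 0 :=
    Set.diff_singleton_eq_self (by simp)
  rw [hset] at hd'
  have heq : ∀ᶠ s in nhdsWithin 0 (Set.Ioi 0),
      slope Real.sqrt 0 s = (Real.sqrt s)⁻¹ := by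
    filter_upwards [self_mem_nhdsWithin] with s hs
    have hs0 : (0:ℝ) < s := hs
    have : s = Real.sqrt s * Real.sqrt s := (Real.mul_self_sqrt hs0.le).symm
    rw [slope_def_field]
    field_simp
    rw [Real.sqrt_zero, sub_zero, sub_zero, Real.mul_self_sqrt hs0.le, div_self hs0.ne']
  have hT : Filter.Tendsto (slope Real.sqrt 0) (nhdsWithin 0 (Set.Ioi 0)) Filter.atTop :=
    inv_sqrt_atTop.congr' (heq.mono fun s hs => hs.symm)
  exact not_tendsto_nhds_of_tendsto_atTop hT _ hd'

theorem stmt_17 :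
    (∀ z : ℂ, Real.sqrt (‖z‖^4) = ‖z‖^2) ∧
    ContDiff ℝ (⊤ : ℕ∞) (fun z : ℂ => ‖z‖^2) ∧
    ContinuousOn (fun p : ℂ × ℝ => Real.sqrt p.2) {p : ℂ × ℝ | ‖p.1‖^4 ≤ p.2} ∧
    ¬ DifferentiableWithinAt ℝ (fun p : ℂ × ℝ => Real.sqrt p.2)
        {p : ℂ × ℝ | ‖p.1‖^4 ≤ p.2} (0, 0) ∧
    Filter.Tendsto (fun s : ℝ => 1/(2*Real.sqrt s)) (nhdsWithin 0 (Set.Ioi 0))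
      Filter.atTop := by
  refine ⟨?_, ?_, ?_, ?_, ?_⟩
  · intro z
    have : ‖z‖^4 = (‖z‖^2)^2 := by ring
    rw [this, Real.sqrt_sq (by positivity)]
  · exact contDiff_norm_sq ℝ
  · exact (Real.continuous_sqrt.comp continuous_snd).continuousOn
  · intro h
    apply not_diff_sqrt
    have hg : DifferentiableWithinAt ℝ (fun s : ℝ => ((0:ℂ), s)) (Set.Ici 0) 0 :=
      ((differentiableAt_const _).prodMk differentiableAt_id).differentiableWithinAt
    have hmaps : Set.MapsTo (fun s : ℝ => ((0:ℂ), s)) (Set.Ici 0)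
        {p : ℂ × ℝ | ‖p.1‖^4 ≤ p.2} := by
      intro s hs; simpa using hs
    exact h.comp (0:ℝ) hg hmaps
  · have h2 : Filter.Tendsto (fun s : ℝ => 2 * Real.sqrt s)
        (nhdsWithin 0 (Set.Ioi 0)) (nhdsWithin 0 (Set.Ioi 0)) := by
      apply tendsto_nhdsWithin_of_tendsto_nhds_of_eventually_within
      · have := (Real.continuous_sqrt.tendsto 0).mono_left
          (nhdsWithin_le_nhds (s := Set.Ioi (0:ℝ)))
        simpa using (this.const_mul 2)
      · filter_upwards [self_mem_nhdsWithin] with s hs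
        have : (0:ℝ) < Real.sqrt s := Real.sqrt_pos.2 hs
        exact Set.mem_Ioi.2 (by positivity)
    exact (tendsto_inv_nhdsGT_zero.comp h2).congr
      (fun s => by simp [Function.comp, one_div])
end
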